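/- arXiv:2006.15504 — 8 statements merged into one kernel-verified Lean document; each statement's English description precedes it below -/
import Mathlib

section
/- For every complex number z with Re(z) ≤ 0, |e^z − 1| ≤ 1.682·|z|^{1/4}. -/
/-! On the closed left half-plane `‖exp‖ ≤ 1`, so `‖exp z - 1‖ ≤ 2`, and the mean value inequality
along the segment `[0, z]` gives `‖exp z - 1‖ ≤ ‖z‖`. Interpolating, `min r 2 ≤ 2 ^ (3/4) * r ^ (1/4)`,
and `2 ^ (3/4) = 8 ^ (1/4) < 1.682`. -/

namespace Complex

theorem norm_exp_le_one_of_re_nonpos {z : ℂ} (hz : z.re ≤ 0) : ‖exp z‖ ≤ 1 := by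
  rw [norm_exp]
  exact Real.exp_le_one_iff.mpr hz

theorem norm_exp_sub_one_le_two_of_re_nonpos {z : ℂ} (hz : z.re ≤ 0) : ‖exp z - 1‖ ≤ 2 :=
  calc ‖exp z - 1‖ ≤ ‖exp z‖ + ‖(1 : ℂ)‖ := norm_sub_le _ _
    _ ≤ 1 + 1 := by rw [norm_one]; gcongr; exact norm_exp_le_one_of_re_nonpos hz
    _ = 2 := by norm_num

theorem norm_exp_sub_one_le_norm_of_re_nonpos {z : ℂ} (hz : z.re ≤ 0) : ‖exp z - 1‖ ≤ ‖z‖ := by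
  have h := (convex_halfSpace_re_le 0).norm_image_sub_le_of_norm_deriv_le (C := 1)
    (fun _ _ => differentiableAt_exp)
    (fun w hw => by rw [deriv_exp]; exact norm_exp_le_one_of_re_nonpos hw)
    (x := 0) (y := z) (by simp) hz
  simpa using h

theorem norm_exp_sub_one_le_min_of_re_nonpos {z : ℂ} (hz : z.re ≤ 0) :
    ‖exp z - 1‖ ≤ min ‖z‖ 2 :=
  le_min (norm_exp_sub_one_le_norm_of_re_nonpos hz) (norm_exp_sub_one_le_two_of_re_nonpos hz)

end Complex

theorem Real.min_le_rpow_mul_rpow {r c p : ℝ} (hr : 0 ≤ r) (hc : 0 ≤ c) (hp₀ : 0 ≤ p)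
    (hp₁ : p ≤ 1) : min r c ≤ c ^ (1 - p) * r ^ p := by
  rcases le_total r c with hrc | hcr
  · calc min r c = r ^ (1 - p) * r ^ p := by
          rw [min_eq_left hrc, ← Real.rpow_add' hr (by norm_num), sub_add_cancel, Real.rpow_one]
      _ ≤ c ^ (1 - p) * r ^ p := by gcongr
  · calc min r c = c ^ (1 - p) * c ^ p := by
          rw [min_eq_right hcr, ← Real.rpow_add' hc (by norm_num), sub_add_cancel, Real.rpow_one]
      _ ≤ c ^ (1 - p) * r ^ p := by gcongr

theorem two_rpow_three_quarters_le : (2 : ℝ) ^ (1 - (1 : ℝ) / 4) ≤ 1.682 := by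
  have h : ((2 : ℝ) ^ (1 - (1 : ℝ) / 4)) ^ (4 : ℕ) = 8 := by
    rw [← Real.rpow_natCast, ← Real.rpow_mul (by norm_num)]
    norm_num
  apply le_of_pow_le_pow_left₀ (n := 4) (by norm_num) (by norm_num)
  rw [h]
  norm_num

theorem exp_sub_one_bound (z : ℂ) (hz : z.re ≤ 0) :
    ‖Complex.exp z - 1‖ ≤ 1.682 * ‖z‖ ^ ((1 : ℝ) / 4) :=
  calc ‖Complex.exp z - 1‖ ≤ min ‖z‖ 2 := Complex.norm_exp_sub_one_le_min_of_re_nonpos hz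
    _ ≤ 2 ^ (1 - (1 : ℝ) / 4) * ‖z‖ ^ ((1 : ℝ) / 4) :=
        Real.min_le_rpow_mul_rpow (norm_nonneg z) zero_le_two (by norm_num) (by norm_num)
    _ ≤ 1.682 * ‖z‖ ^ ((1 : ℝ) / 4) := by gcongr; exact two_rpow_three_quarters_le
end

section
/- For every real y > 0, K₀(y) < 0.975·y^{−1/2}, i.e. (1/2)·∫₀^∞ exp(−t − y²/(4t))·dt/t < 0.975·y^{−1/2}. -/
/-!
By AM–GM, `e^{-t-y²/4t}/t` is at most `(k P(t) + Q(t)/k)/2` for any `k > 0`, where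
`P(t) = t^{-1/2} e^{-2t}` and `Q(t) = t^{-3/2} e^{-y²/2t}` satisfy `P Q = (e^{-t-y²/4t}/t)²`.
Both are Gamma integrals (`Q` after `t ↦ 1/t`), and for `k = √(2/y)` each term contributes
`√π / √y`, so `K₀(y) ≤ (√π/2) y^{-1/2} ≈ 0.886 y^{-1/2}`.
-/

open Real MeasureTheory Set

lemma two_mul_le_mul_add_div_of_sq_eq_mul {w P Q k : ℝ} (hP : 0 ≤ P) (hQ : 0 ≤ Q) (hk : 0 < k)
    (h : w ^ 2 = P * Q) : 2 * w ≤ k * P + Q / k := by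
  have hsq : (2 * w) ^ 2 ≤ (k * P + Q / k) ^ 2 := by
    have : (k * P + Q / k) ^ 2 - (k * P - Q / k) ^ 2 = 4 * (P * Q) := by field_simp; ring
    nlinarith [sq_nonneg (k * P - Q / k)]
  exact (abs_le_of_sq_le_sq' hsq (by positivity)).2

lemma integrableOn_rpow_mul_exp_neg_mul_Ioi {a r : ℝ} (ha : 0 < a) (hr : 0 < r) :
    IntegrableOn (fun t : ℝ => t ^ (a - 1) * exp (-(r * t))) (Ioi 0) := by
  simpa only [rpow_one, neg_mul] using
    integrableOn_rpow_mul_exp_neg_mul_rpow (s := a - 1) (by linarith) one_pos hr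

lemma eqOn_inversion_rpow_mul_exp_neg_mul (a c : ℝ) :
    EqOn (fun x : ℝ => (|(-1 : ℝ)| * x ^ ((-1 : ℝ) - 1)) •
        (fun u : ℝ => u ^ (a - 1) * exp (-(c * u))) (x ^ (-1 : ℝ)))
      (fun t => t ^ (-a - 1) * exp (-(c / t))) (Ioi 0) := by
  intro x (hx : 0 < x)
  simp only [smul_eq_mul, abs_neg, abs_one, one_mul]
  rw [← rpow_mul hx.le, ← mul_assoc, ← rpow_add hx, rpow_neg_one, div_eq_mul_inv]
  ring_nf

lemma integrableOn_rpow_mul_exp_neg_div_Ioi {a c : ℝ} (ha : 0 < a) (hc : 0 < c) :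
    IntegrableOn (fun t : ℝ => t ^ (-a - 1) * exp (-(c / t))) (Ioi 0) :=
  ((integrableOn_Ioi_comp_rpow_iff _ (by norm_num)).2
    (integrableOn_rpow_mul_exp_neg_mul_Ioi ha hc)).congr_fun
    (eqOn_inversion_rpow_mul_exp_neg_mul a c) measurableSet_Ioi

lemma integral_rpow_mul_exp_neg_div_Ioi {a c : ℝ} (ha : 0 < a) (hc : 0 < c) :
    ∫ t in Ioi 0, t ^ (-a - 1) * exp (-(c / t)) = (1 / c) ^ a * Gamma a := by
  rw [← setIntegral_congr_fun measurableSet_Ioi (eqOn_inversion_rpow_mul_exp_neg_mul a c)]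
  exact (integral_comp_rpow_Ioi _ (by norm_num)).trans (integral_rpow_mul_exp_neg_mul_Ioi ha hc)

lemma sq_exp_neg_sub_div_div {y t : ℝ} (ht : 0 < t) :
    (exp (-t - y ^ 2 / (4 * t)) / t) ^ 2 =
      t ^ ((1 / 2 : ℝ) - 1) * exp (-(2 * t)) *
        (t ^ (-(1 / 2 : ℝ) - 1) * exp (-(y ^ 2 / 2 / t))) := by
  rw [mul_mul_mul_comm, ← rpow_add ht, ← exp_add, div_pow, ← exp_nat_mul]
  norm_num
  rw [div_eq_inv_mul]
  congr 2
  field_simp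
  ring

lemma two_mul_exp_neg_sub_div_div_le {y t k : ℝ} (ht : 0 < t) (hk : 0 < k) :
    2 * (exp (-t - y ^ 2 / (4 * t)) / t) ≤
      k * (t ^ ((1 / 2 : ℝ) - 1) * exp (-(2 * t))) +
        t ^ (-(1 / 2 : ℝ) - 1) * exp (-(y ^ 2 / 2 / t)) / k :=
  two_mul_le_mul_add_div_of_sq_eq_mul (by positivity) (by positivity) hk
    (sq_exp_neg_sub_div_div ht)

theorem integral_exp_neg_sub_div_div_le {y : ℝ} (hy : 0 < y) :
    ∫ t in Ioi 0, exp (-t - y ^ 2 / (4 * t)) / t ≤ √π * y ^ (-(1 : ℝ) / 2) := by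
  set k := √(2 / y)
  have hk : 0 < k := by positivity
  have hP := integrableOn_rpow_mul_exp_neg_mul_Ioi (a := 1 / 2) (by norm_num) two_pos
  have hQ := integrableOn_rpow_mul_exp_neg_div_Ioi (a := 1 / 2) (c := y ^ 2 / 2) (by norm_num)
    (by positivity)
  have hmono : ∫ t in Ioi 0, 2 * (exp (-t - y ^ 2 / (4 * t)) / t) ≤
      ∫ t in Ioi 0, (k * (t ^ ((1 / 2 : ℝ) - 1) * exp (-(2 * t))) +
        t ^ (-(1 / 2 : ℝ) - 1) * exp (-(y ^ 2 / 2 / t)) / k) := by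
    refine integral_mono_of_nonneg ?_ ((hP.const_mul k).add (hQ.div_const k)) ?_ <;>
      filter_upwards [ae_restrict_mem measurableSet_Ioi] with t (ht : 0 < t)
    · positivity
    · exact two_mul_exp_neg_sub_div_div_le ht hk
  rw [integral_const_mul, integral_add (hP.const_mul k) (hQ.div_const k), integral_const_mul,
    integral_div, integral_rpow_mul_exp_neg_mul_Ioi (by norm_num) two_pos,
    integral_rpow_mul_exp_neg_div_Ioi (by norm_num) (by positivity), Gamma_one_half_eq,
    ← sqrt_eq_rpow, ← sqrt_eq_rpow] at hmono
  have hP_val : k * √(1 / 2) = (√y)⁻¹ := by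
    rw [← sqrt_mul (by positivity), ← sqrt_inv]
    congr 1
    field_simp
  have hQ_val : √(1 / (y ^ 2 / 2)) / k = (√y)⁻¹ := by
    rw [← sqrt_div' _ (by positivity : (0 : ℝ) ≤ 2 / y), ← sqrt_inv]
    congr 1
    field_simp
  have hy_rpow : y ^ (-(1 : ℝ) / 2) = (√y)⁻¹ := by
    rw [neg_div, rpow_neg hy.le, sqrt_eq_rpow]
  have hbound : k * (√(1 / 2) * √π) + √(1 / (y ^ 2 / 2)) * √π / k = 2 * (√π * (√y)⁻¹) := by
    linear_combination √π * hP_val + √π * hQ_val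
  rw [hy_rpow]
  linarith

theorem besselK0_bound_one (y : ℝ) (hy : 0 < y) :
    (1 / 2) * ∫ t in Set.Ioi (0 : ℝ), Real.exp (-t - y ^ 2 / (4 * t)) / t <
      0.975 * y ^ (-(1 : ℝ) / 2) := by
  have hsqrt_pi : √π < 1.95 := by
    rw [sqrt_lt' (by norm_num)]
    linarith [pi_lt_d2]
  have hy_rpow_pos : 0 < y ^ (-(1 : ℝ) / 2) := by positivity
  calc (1 / 2) * ∫ t in Ioi (0 : ℝ), exp (-t - y ^ 2 / (4 * t)) / t
      ≤ (1 / 2) * (√π * y ^ (-(1 : ℝ) / 2)) := by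
        gcongr
        exact integral_exp_neg_sub_div_div_le hy
    _ < 0.975 * y ^ (-(1 : ℝ) / 2) := by nlinarith
end

section
/- For every real y > 0, K₀(y) < 1.7·y^{−7/2}, i.e. (1/2)·∫₀^∞ exp(−t − y²/(4t))·dt/t < 1.7·y^{−7/2}. -/
/-!
Substituting `t = (y / 2) e^s` turns the integral into `K₀(y) = (1/2) ∫ exp (-y cosh s) ds`, and
`cosh s ≥ 1 + s² / 2` bounds this by the Gaussian integral `√(π / (2y)) e^{-y}`. It remains to note
that `y³ e^{-y} ≤ 27 e^{-3}` and that `√(π / 2) · 27 e^{-3} ≈ 1.685 < 1.7`.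
-/

open Real MeasureTheory Set

noncomputable def besselK0 (y : ℝ) : ℝ :=
  (1 / 2) * ∫ t in Ioi (0 : ℝ), exp (-t - y ^ 2 / (4 * t)) / t

theorem image_univ_mul_exp {c : ℝ} (hc : 0 < c) : (fun s => c * exp s) '' univ = Ioi 0 := by
  refine Subset.antisymm (by rintro _ ⟨s, -, rfl⟩; exact mul_pos hc (exp_pos s)) fun t ht => ?_
  refine ⟨log (t / c), trivial, ?_⟩
  simp only [exp_log (div_pos ht hc), mul_div_cancel₀ t hc.ne']

theorem integral_Ioi_div_eq_integral_comp_mul_exp (f : ℝ → ℝ) {c : ℝ} (hc : 0 < c) :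
    ∫ t in Ioi (0 : ℝ), f t / t = ∫ s, f (c * exp s) := by
  have hderiv : ∀ s ∈ univ, HasDerivWithinAt (fun s => c * exp s) (c * exp s) univ s :=
    fun s _ => ((hasDerivAt_exp s).const_mul c).hasDerivWithinAt
  have hinj : InjOn (fun s => c * exp s) univ :=
    fun a _ b _ h => exp_injective (mul_left_cancel₀ hc.ne' h)
  rw [← image_univ_mul_exp hc, integral_image_eq_integral_abs_deriv_smul MeasurableSet.univ
    hderiv hinj, Measure.restrict_univ]
  refine integral_congr_ae (Filter.Eventually.of_forall fun s => ?_)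
  have hpos : 0 < c * exp s := mul_pos hc (exp_pos s)
  simp only [smul_eq_mul, abs_of_pos hpos]
  field_simp

theorem integral_exp_neg_sub_div_eq_integral_exp_neg_mul_cosh {y : ℝ} (hy : 0 < y) :
    ∫ t in Ioi (0 : ℝ), exp (-t - y ^ 2 / (4 * t)) / t = ∫ s, exp (-y * cosh s) := by
  rw [integral_Ioi_div_eq_integral_comp_mul_exp _ (half_pos hy)]
  congr 1 with s
  rw [cosh_eq, exp_neg]
  congr 1
  field_simp
  ring

theorem one_add_sq_div_two_le_cosh (x : ℝ) : 1 + x ^ 2 / 2 ≤ cosh x := by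
  have hsq : (x / 2) ^ 2 ≤ sinh (x / 2) ^ 2 := by
    rcases le_total 0 (x / 2) with h | h
    · nlinarith [self_le_sinh_iff.2 h]
    · nlinarith [sinh_le_self_iff.2 h]
  have hcosh : cosh x = 1 + 2 * sinh (x / 2) ^ 2 := by
    have h := cosh_two_mul (x / 2)
    rw [mul_div_cancel₀ x two_ne_zero, cosh_sq'] at h
    linarith
  rw [hcosh]
  linarith

theorem integral_exp_neg_mul_cosh_le {y : ℝ} (hy : 0 < y) :
    ∫ s, exp (-y * cosh s) ≤ exp (-y) * √(2 * π / y) := by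
  have hgauss : ∫ s, exp (-y) * exp (-(y / 2) * s ^ 2) = exp (-y) * √(2 * π / y) := by
    rw [integral_const_mul, integral_gaussian]
    congr 2
    field_simp
  rw [← hgauss]
  refine integral_mono_of_nonneg (Filter.Eventually.of_forall fun s => (exp_pos _).le)
    ((integrable_exp_neg_mul_sq (half_pos hy)).const_mul _)
    (Filter.Eventually.of_forall fun s => ?_)
  simp only [← exp_add, exp_le_exp]
  nlinarith [one_add_sq_div_two_le_cosh s]

theorem besselK0_le {y : ℝ} (hy : 0 < y) : besselK0 y ≤ √(π / (2 * y)) * exp (-y) := by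
  rw [besselK0, integral_exp_neg_sub_div_eq_integral_exp_neg_mul_cosh hy]
  calc (1 / 2) * ∫ s, exp (-y * cosh s) ≤ (1 / 2) * (exp (-y) * √(2 * π / y)) := by
        gcongr; exact integral_exp_neg_mul_cosh_le hy
    _ = √(π / (2 * y)) * exp (-y) := by
        rw [show 2 * π / y = 2 ^ 2 * (π / (2 * y)) by field_simp, sqrt_mul' _ (by positivity),
          sqrt_sq two_pos.le]
        ring

theorem pow_mul_exp_neg_le (n : ℕ) {x : ℝ} (hx : 0 ≤ x) :
    x ^ n * exp (-x) ≤ n ^ n * exp (-n) := by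
  rcases n.eq_zero_or_pos with rfl | hn
  · simpa using hx
  have hn' : (0 : ℝ) < n := Nat.cast_pos.2 hn
  have hlin : x / n ≤ exp (x / n - 1) := by linarith [add_one_le_exp (x / n - 1)]
  have hpow : x ^ n ≤ n ^ n * exp (x - n) := by
    calc x ^ n = n ^ n * (x / n) ^ n := by rw [← mul_pow, mul_div_cancel₀ x hn'.ne']
      _ ≤ n ^ n * exp (x / n - 1) ^ n := by gcongr
      _ = n ^ n * exp (x - n) := by rw [← exp_nat_mul]; congr 2; field_simp
  calc x ^ n * exp (-x) ≤ n ^ n * exp (x - n) * exp (-x) := by gcongr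
    _ = n ^ n * exp (-n) := by rw [mul_assoc, ← exp_add]; ring_nf

theorem exp_neg_three_lt : exp (-3) < 0.049788 := by
  have h3 : (2.7182818283 : ℝ) ^ 3 < exp 3 := by
    rw [show (3 : ℝ) = (3 : ℕ) * 1 by norm_num, exp_nat_mul]
    gcongr
    exact exp_one_gt_d9
  rw [exp_neg, inv_lt_comm₀ (exp_pos 3) (by norm_num)]
  exact lt_trans (by norm_num) h3

theorem sqrt_pi_div_two_lt : √(π / 2) < 1.2534 := by
  rw [sqrt_lt' (by norm_num)]
  linarith [pi_lt_d4]

theorem rpow_neg_seven_div_two {y : ℝ} (hy : 0 < y) : y ^ (-(7 : ℝ) / 2) = (y ^ 3 * √y)⁻¹ := by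
  rw [neg_div, rpow_neg hy.le, show (7 : ℝ) / 2 = (3 : ℕ) + 1 / 2 by norm_num, rpow_add hy,
    rpow_natCast, sqrt_eq_rpow]

theorem sqrt_pi_div_mul_exp_neg_lt {y : ℝ} (hy : 0 < y) :
    √(π / (2 * y)) * exp (-y) < 1.7 * y ^ (-(7 : ℝ) / 2) := by
  have hcube : √(π / 2) * (y ^ 3 * exp (-y)) < 1.7 := by
    calc √(π / 2) * (y ^ 3 * exp (-y)) ≤ √(π / 2) * (3 ^ 3 * exp (-3)) :=
          mul_le_mul_of_nonneg_left (by exact_mod_cast pow_mul_exp_neg_le 3 hy.le) (sqrt_nonneg _)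
      _ < 1.2534 * (3 ^ 3 * 0.049788) := by
          gcongr
          · exact sqrt_pi_div_two_lt
          · exact exp_neg_three_lt
      _ < 1.7 := by norm_num
  calc √(π / (2 * y)) * exp (-y) = √(π / 2) * (y ^ 3 * exp (-y)) * (y ^ 3 * √y)⁻¹ := by
        rw [show π / (2 * y) = π / 2 / y by ring, sqrt_div' _ hy.le]
        field_simp
    _ < 1.7 * y ^ (-(7 : ℝ) / 2) := by
        rw [rpow_neg_seven_div_two hy]
        gcongr

theorem besselK0_bound_two (y : ℝ) (hy : 0 < y) :
    (1 / 2) * ∫ t in Set.Ioi (0 : ℝ), Real.exp (-t - y ^ 2 / (4 * t)) / t <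
      1.7 * y ^ (-(7 : ℝ) / 2) :=
  (besselK0_le hy).trans_lt (sqrt_pi_div_mul_exp_neg_lt hy)
end

section
/- Let 0 < δ ≤ 1/4 and let s = 1/2 + δ/2 + it with t real. Then |Γ(s + 9/4)·Γ(s − 1/4)| / |Γ(2s + 1)| ≤ 5.84·(1 + |t|)^{1/2}. -/
/-!
Write `s = σ + t i` with `σ = 1/2 + δ/2` and `f(x) = 1 + t²/x²`, so that `|x + t i|² = x² f(x)`.
Euler's limit formula for `Γ` turns `|Γ(s + 9/4) Γ(s - 1/4) / Γ(2s + 1)|²` into the square of the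
real quotient `Γ(σ + 9/4) Γ(σ - 1/4) / Γ(2σ + 1)` times
`∏ⱼ f(σ + (j+1)/2) / ∏ⱼ f(σ - 1/4 + j) f(σ + 9/4 + j)`.
Since `log f` is convex, `f(y)⁴ ≤ f(y - 3/4) f(y + 1/4)³`; multiplying these over the factors of
the numerator bounds the fourth power of this product quotient by
`f(σ + 3/4) f(σ + 5/4) ≤ (1 + t²)²`.
The real quotient decreases in `σ ≥ 1/2` (compare the Euler products factor by factor), so it is
at most `Γ(11/4) Γ(1/4) = (21/16) √2 π < 5.84`; finally `1 + t² ≤ (1 + |t|)²`.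
-/

open Real Complex Filter Finset Topology
open scoped Nat

namespace GammaQuotient

noncomputable def sqFactor (T x : ℝ) : ℝ := 1 + T / x ^ 2

variable {T : ℝ}

theorem one_le_sqFactor (hT : 0 ≤ T) (x : ℝ) : 1 ≤ sqFactor T x :=
  le_add_of_nonneg_right (div_nonneg hT (sq_nonneg x))

theorem sqFactor_pos (hT : 0 ≤ T) (x : ℝ) : 0 < sqFactor T x :=
  zero_lt_one.trans_le (one_le_sqFactor hT x)

theorem sqFactor_antitoneOn (hT : 0 ≤ T) : AntitoneOn (sqFactor T) (Set.Ioi 0) := by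
  intro x (hx : 0 < x) y _ hxy
  unfold sqFactor
  gcongr

theorem one_add_rpow_mul_rpow_le {u v w₁ w₂ : ℝ} (hu : 0 ≤ u) (hv : 0 ≤ v) (hw₁ : 0 ≤ w₁)
    (hw₂ : 0 ≤ w₂) (hw : w₁ + w₂ = 1) :
    1 + u ^ w₁ * v ^ w₂ ≤ (1 + u) ^ w₁ * (1 + v) ^ w₂ := by
  have hU : 0 < 1 + u := by linarith
  have hV : 0 < 1 + v := by linarith
  have h₁ := geom_mean_le_arith_mean2_weighted hw₁ hw₂ (one_div_pos.2 hU).le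
    (one_div_pos.2 hV).le hw
  have h₂ := geom_mean_le_arith_mean2_weighted hw₁ hw₂ (div_nonneg hu hU.le)
    (div_nonneg hv hV.le) hw
  have hsum : w₁ * (1 / (1 + u)) + w₂ * (1 / (1 + v)) +
      (w₁ * (u / (1 + u)) + w₂ * (v / (1 + v))) = 1 := by
    field_simp
    linear_combination (1 + u) * (1 + v) * hw
  have key := (add_le_add h₁ h₂).trans hsum.le
  rwa [div_rpow zero_le_one hU.le, div_rpow zero_le_one hV.le, div_rpow hu hU.le,
    div_rpow hv hV.le, one_rpow, one_rpow, div_mul_div_comm, div_mul_div_comm, ← add_div,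
    div_le_one (by positivity), one_mul] at key

theorem sqFactor_le_rpow_mul_rpow (hT : 0 ≤ T) {a b w₁ w₂ : ℝ} (ha : 0 < a) (hb : 0 < b)
    (hw₁ : 0 ≤ w₁) (hw₂ : 0 ≤ w₂) (hw : w₁ + w₂ = 1) :
    sqFactor T (w₁ * a + w₂ * b) ≤ sqFactor T a ^ w₁ * sqFactor T b ^ w₂ := by
  have hgm : a ^ w₁ * b ^ w₂ ≤ w₁ * a + w₂ * b :=
    geom_mean_le_arith_mean2_weighted hw₁ hw₂ ha.le hb.le hw
  have hTerm : T / (w₁ * a + w₂ * b) ^ 2 ≤ (T / a ^ 2) ^ w₁ * (T / b ^ 2) ^ w₂ := by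
    rw [div_rpow hT (by positivity), div_rpow hT (by positivity), div_mul_div_comm,
      ← rpow_add' hT (by rw [hw]; norm_num), hw, rpow_one, ← rpow_pow_comm ha.le,
      ← rpow_pow_comm hb.le, ← mul_pow]
    gcongr
  calc sqFactor T (w₁ * a + w₂ * b) ≤ 1 + (T / a ^ 2) ^ w₁ * (T / b ^ 2) ^ w₂ := by
        unfold sqFactor; linarith
    _ ≤ _ := one_add_rpow_mul_rpow_le (by positivity) (by positivity) hw₁ hw₂ hw

theorem sqFactor_pow_four_le (hT : 0 ≤ T) {y : ℝ} (hy : 3 / 4 < y) :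
    sqFactor T y ^ 4 ≤ sqFactor T (y - 3 / 4) * sqFactor T (y + 1 / 4) ^ 3 := by
  have h := sqFactor_le_rpow_mul_rpow hT (a := y - 3 / 4) (b := y + 1 / 4) (w₁ := 1 / 4)
    (w₂ := 3 / 4) (by linarith) (by linarith) (by norm_num) (by norm_num) (by norm_num)
  rw [show 1 / 4 * (y - 3 / 4) + 3 / 4 * (y + 1 / 4) = y by ring] at h
  calc sqFactor T y ^ 4
      ≤ (sqFactor T (y - 3 / 4) ^ (1 / 4 : ℝ) * sqFactor T (y + 1 / 4) ^ (3 / 4 : ℝ)) ^ 4 := by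
        gcongr
        exact (sqFactor_pos hT y).le
    _ = _ := by
        rw [mul_pow, ← rpow_mul_natCast (sqFactor_pos hT _).le,
          ← rpow_mul_natCast (sqFactor_pos hT _).le]
        norm_num

theorem mul_mul_prod_Ico_le_prod_mul_prod {g : ℕ → ℝ} (hg : ∀ j, 1 ≤ g j) {n : ℕ}
    (hn : 2 ≤ n) :
    g 0 * g 2 * ∏ j ∈ Ico 4 (n + 3), g j ≤
      (∏ m ∈ range (n + 1), g (2 * m)) * ∏ m ∈ range (n + 1), g (2 * m + 5) := by
  rw [← prod_image (f := g) (g := fun m => 2 * m) (by intro; grind),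
    ← prod_image (f := g) (g := fun m => 2 * m + 5) (by intro; grind),
    ← prod_union (by rw [disjoint_left]; grind), mul_assoc,
    ← prod_insert (by simp), ← prod_insert (by simp)]
  refine prod_le_prod_of_subset_of_one_le ?_ (fun j _ => zero_le_one.trans (hg j))
    (fun j _ _ => hg j)
  intro j hj
  simp only [mem_insert, mem_Ico, mem_union, mem_image, mem_range] at hj ⊢
  rcases Nat.even_or_odd' j with ⟨m, rfl | rfl⟩
  · exact Or.inl ⟨m, by omega, rfl⟩
  · exact Or.inr ⟨m - 2, by omega, by omega⟩

theorem prod_pow_four_le_of_pow_four_le_mul_pow_three {a g : ℕ → ℝ} (ha : ∀ j, 0 ≤ a j)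
    (hg : ∀ j, 1 ≤ g j) (h₀ : a 0 ≤ g 0) (h₁ : a 1 ≤ g 2)
    (hstep : ∀ j, 2 ≤ j → a j ^ 4 ≤ g j * g (j + 2) ^ 3) {n : ℕ} (hn : 2 ≤ n) :
    (∏ j ∈ range (n + 1), a j) ^ 4 ≤
      g 2 * g 3 * ((∏ m ∈ range (n + 1), g (2 * m)) * ∏ m ∈ range (n + 1), g (2 * m + 5)) ^ 4 := by
  have hg₀ : ∀ j, 0 ≤ g j := fun j => zero_le_one.trans (hg j)
  set P := ∏ j ∈ Ico 4 (n + 3), g j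
  have hP : 0 ≤ P := prod_nonneg fun j _ => hg₀ j
  have hhead : (∏ j ∈ range (n + 1), a j) ^ 4 ≤
      (g 0 * g 2) ^ 4 * ∏ j ∈ Ico 2 (n + 1), g j * g (j + 2) ^ 3 := by
    rw [← prod_range_mul_prod_Ico _ (by omega : 2 ≤ n + 1), mul_pow, prod_range_succ,
      prod_range_one, ← prod_pow]
    gcongr with j hj
    · exact mul_nonneg (ha 0) (ha 1)
    · exact ha 1
    · exact hg₀ 0
    · exact hstep j (mem_Ico.1 hj).1
  have htail : ∏ j ∈ Ico 2 (n + 1), g j * g (j + 2) ^ 3 ≤ g 2 * g 3 * P ^ 4 := by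
    have hpad : ∏ j ∈ Ico 2 (n + 1), g j ≤ g 2 * g 3 * P := by
      rw [show g 2 * g 3 * P = ∏ j ∈ Ico 2 (n + 3), g j by
        rw [← prod_Ico_consecutive _ (by omega : 2 ≤ 4) (by omega : 4 ≤ n + 3),
          show ∏ j ∈ Ico 2 4, g j = g 2 * g 3 by simp [prod_Ico_succ_top]]]
      exact prod_le_prod_of_subset_of_one_le (Ico_subset_Ico_right (by omega))
        (fun j _ => hg₀ j) (fun j _ _ => hg j)
    rw [prod_mul_distrib, prod_pow, prod_Ico_add' g 2 (n + 1) 2]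
    calc (∏ j ∈ Ico 2 (n + 1), g j) * P ^ 3 ≤ g 2 * g 3 * P * P ^ 3 := by gcongr
      _ = g 2 * g 3 * P ^ 4 := by ring
  have hcover := mul_mul_prod_Ico_le_prod_mul_prod hg hn
  have hg02 : 0 ≤ g 0 * g 2 := mul_nonneg (hg₀ 0) (hg₀ 2)
  have hg23 : 0 ≤ g 2 * g 3 := mul_nonneg (hg₀ 2) (hg₀ 3)
  calc (∏ j ∈ range (n + 1), a j) ^ 4
      ≤ (g 0 * g 2) ^ 4 * (g 2 * g 3 * P ^ 4) := hhead.trans (by gcongr)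
    _ = g 2 * g 3 * (g 0 * g 2 * P) ^ 4 := by ring
    _ ≤ _ := by gcongr

theorem sqFactor_le_one_add (hT : 0 ≤ T) {x : ℝ} (hx : 1 ≤ x) : sqFactor T x ≤ 1 + T := by
  simpa [sqFactor] using
    sqFactor_antitoneOn hT (Set.mem_Ioi.2 one_pos) (Set.mem_Ioi.2 (by linarith)) hx

/-- The three products collect the factors of `Γ(2s + 1)` (rescaled by `2`), `Γ(s - 1/4)` and
`Γ(s + 9/4)`; their points are `σ - 1/4 + k/4` with `k` odd, `k ≡ 0` and `k ≡ 2 (mod 4)`. -/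
theorem prod_sqFactor_pow_four_le (hT : 0 ≤ T) {σ : ℝ} (hσ : 1 / 2 ≤ σ) {n : ℕ} (hn : 2 ≤ n) :
    (∏ j ∈ range (n + 1), sqFactor T (σ + (j + 1) / 2)) ^ 4 ≤
      (1 + T) ^ 2 * ((∏ m ∈ range (n + 1), sqFactor T (σ - 1 / 4 + m)) *
        ∏ m ∈ range (n + 1), sqFactor T (σ + 9 / 4 + m)) ^ 4 := by
  set g : ℕ → ℝ := fun k => sqFactor T (σ - 1 / 4 + k / 2)
  have hanti := sqFactor_antitoneOn hT
  have h₀ : sqFactor T (σ + ((0 : ℕ) + 1) / 2) ≤ g 0 :=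
    hanti (by norm_num; linarith) (by norm_num; linarith) (by norm_num; linarith)
  have h₁ : sqFactor T (σ + ((1 : ℕ) + 1) / 2) ≤ g 2 :=
    hanti (by norm_num; linarith) (by norm_num; linarith) (by norm_num)
  have hstep (j : ℕ) : sqFactor T (σ + (j + 1) / 2) ^ 4 ≤ g j * g (j + 2) ^ 3 := by
    have h := sqFactor_pow_four_le hT (y := σ + (j + 1) / 2)
      (by have := j.cast_nonneg (α := ℝ); linarith)
    rwa [show σ + (j + 1) / 2 - 3 / 4 = σ - 1 / 4 + j / 2 by ring,
      show σ + (j + 1) / 2 + 1 / 4 = σ - 1 / 4 + ((j + 2 : ℕ) : ℝ) / 2 by push_cast; ring] at h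
  have h := prod_pow_four_le_of_pow_four_le_mul_pow_three
    (a := fun j => sqFactor T (σ + (j + 1) / 2)) (g := g)
    (fun j => (sqFactor_pos hT _).le) (fun k => one_le_sqFactor hT _)
    h₀ h₁ (fun j _ => hstep j) hn
  have hg₂ : g 2 ≤ 1 + T := sqFactor_le_one_add hT (by norm_num; linarith)
  have hg₃ : g 3 ≤ 1 + T := sqFactor_le_one_add hT (by norm_num; linarith)
  have heven (m : ℕ) : g (2 * m) = sqFactor T (σ - 1 / 4 + m) := by
    simp only [g]; push_cast; ring_nf
  have hodd (m : ℕ) : g (2 * m + 5) = sqFactor T (σ + 9 / 4 + m) := by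
    simp only [g]; push_cast; ring_nf
  simp only [heven, hodd] at h
  refine h.trans ?_
  rw [sq]
  gcongr
  exact (sqFactor_pos hT _).le

theorem norm_ofReal_add_mul_I_sq {x : ℝ} (hx : x ≠ 0) (y : ℝ) :
    ‖(x + y * I : ℂ)‖ ^ 2 = x ^ 2 * sqFactor (y ^ 2) x := by
  rw [Complex.sq_norm, Complex.normSq_add_mul_I, sqFactor]
  field_simp

theorem norm_GammaSeq_sq {x : ℝ} (hx : 0 < x) (y : ℝ) {n : ℕ} (hn : n ≠ 0) :
    ‖Complex.GammaSeq (x + y * I) n‖ ^ 2 =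
      Real.GammaSeq x n ^ 2 / ∏ j ∈ range (n + 1), sqFactor (y ^ 2) (x + j) := by
  have hfactor (j : ℕ) :
      ‖(x + y * I : ℂ) + j‖ ^ 2 = (x + j) ^ 2 * sqFactor (y ^ 2) (x + j) := by
    rw [show (x + y * I : ℂ) + j = ((x + j : ℝ) : ℂ) + y * I by push_cast; ring]
    exact norm_ofReal_add_mul_I_sq (by positivity) y
  have hprod : ∏ j ∈ range (n + 1), (x + j) ≠ 0 := prod_ne_zero_iff.2 fun j _ => by positivity
  have hsq : ∏ j ∈ range (n + 1), sqFactor (y ^ 2) (x + j) ≠ 0 :=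
    prod_ne_zero_iff.2 fun j _ => (sqFactor_pos (sq_nonneg y) _).ne'
  rw [Complex.GammaSeq, Real.GammaSeq, norm_div, norm_mul, norm_prod,
    norm_natCast_cpow_of_pos (Nat.pos_of_ne_zero hn), Complex.norm_natCast, div_pow, div_pow,
    ← prod_pow, prod_congr rfl fun j _ => hfactor j, prod_mul_distrib, prod_pow]
  simp only [add_re, ofReal_re, mul_re, I_re, mul_zero, ofReal_im, I_im, mul_one, sub_self,
    add_zero]
  field_simp

theorem GammaSeq_mul_GammaSeq_div_GammaSeq {x y z : ℝ} (hx : 0 < x) (hy : 0 < y) (hz : 0 < z)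
    (hxyz : x + y = z + 1) {n : ℕ} (hn : n ≠ 0) :
    Real.GammaSeq x n * Real.GammaSeq y n / Real.GammaSeq z n =
      n * n ! * ∏ j ∈ range (n + 1), (z + j) / ((x + j) * (y + j)) := by
  have hn' : (0 : ℝ) < n := by positivity
  have hpow : (n : ℝ) ^ x * (n : ℝ) ^ y = (n : ℝ) ^ z * n := by
    rw [← rpow_add hn', hxyz, rpow_add hn', rpow_one]
  have hprod {c : ℝ} (hc : 0 < c) : ∏ j ∈ range (n + 1), (c + j) ≠ 0 :=
    prod_ne_zero_iff.2 fun j _ => by positivity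
  rw [Real.GammaSeq, Real.GammaSeq, Real.GammaSeq, prod_div_distrib, prod_mul_distrib]
  field_simp [hprod hx, hprod hy, hprod hz]
  linear_combination hpow

theorem GammaSeq_nonneg {x : ℝ} (hx : 0 ≤ x) (n : ℕ) : 0 ≤ Real.GammaSeq x n :=
  div_nonneg (by positivity) (prod_nonneg fun j _ => by positivity)

theorem GammaSeq_quotient_le {σ : ℝ} (hσ : 1 / 2 ≤ σ) {n : ℕ} (hn : n ≠ 0) :
    Real.GammaSeq (σ + 9 / 4) n * Real.GammaSeq (σ - 1 / 4) n / Real.GammaSeq (2 * σ + 1) n ≤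
      Real.GammaSeq (11 / 4) n * Real.GammaSeq (1 / 4) n / Real.GammaSeq 2 n := by
  rw [GammaSeq_mul_GammaSeq_div_GammaSeq (by linarith) (by linarith) (by linarith) (by ring) hn,
    GammaSeq_mul_GammaSeq_div_GammaSeq (by norm_num) (by norm_num) (by norm_num) (by norm_num) hn]
  gcongr n * n ! * ?_
  refine prod_le_prod (fun j _ => ?_) fun j _ => ?_
  all_goals have hj : (0 : ℝ) ≤ j := j.cast_nonneg
  · exact div_nonneg (by linarith) (mul_nonneg (by linarith) (by linarith))
  rw [div_le_div_iff₀ (by nlinarith) (by positivity)]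
  nlinarith [mul_nonneg hj (sub_nonneg.2 hσ), mul_nonneg (mul_nonneg hj hj) (sub_nonneg.2 hσ),
    sq_nonneg (σ - 1 / 2)]

theorem sqFactor_sq_mul_mul {c : ℝ} (hc : c ≠ 0) (x : ℝ) :
    sqFactor (c ^ 2 * T) (c * x) = sqFactor T x := by
  rw [sqFactor, sqFactor, mul_pow, mul_div_mul_left _ _ (pow_ne_zero 2 hc)]

theorem norm_GammaSeq_quotient_pow_eight_le {σ : ℝ} (hσ : 1 / 2 ≤ σ) (t : ℝ) {n : ℕ}
    (hn : 2 ≤ n) :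
    ‖Complex.GammaSeq (σ + t * I + 9 / 4) n * Complex.GammaSeq (σ + t * I - 1 / 4) n /
        Complex.GammaSeq (2 * (σ + t * I) + 1) n‖ ^ 8 ≤
      (Real.GammaSeq (σ + 9 / 4) n * Real.GammaSeq (σ - 1 / 4) n /
        Real.GammaSeq (2 * σ + 1) n) ^ 8 * (1 + t ^ 2) ^ 2 := by
  have hn₀ : n ≠ 0 := by omega
  have hT : 0 ≤ t ^ 2 := sq_nonneg t
  set A := ∏ j ∈ range (n + 1), sqFactor (t ^ 2) (σ + (j + 1) / 2)
  set B := ∏ m ∈ range (n + 1), sqFactor (t ^ 2) (σ - 1 / 4 + m) with hB_def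
  set C := ∏ m ∈ range (n + 1), sqFactor (t ^ 2) (σ + 9 / 4 + m) with hC_def
  have hB : 0 < B := prod_pos fun j _ => sqFactor_pos hT _
  have hC : 0 < C := prod_pos fun j _ => sqFactor_pos hT _
  have hA : ∏ j ∈ range (n + 1), sqFactor ((2 * t) ^ 2) (2 * σ + 1 + j) = A := by
    refine prod_congr rfl fun j _ => ?_
    rw [mul_pow, show 2 * σ + 1 + j = 2 * (σ + (j + 1) / 2) by ring,
      sqFactor_sq_mul_mul two_ne_zero]
  have hsq : ‖Complex.GammaSeq (σ + t * I + 9 / 4) n * Complex.GammaSeq (σ + t * I - 1 / 4) n /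
      Complex.GammaSeq (2 * (σ + t * I) + 1) n‖ ^ 2 =
      (Real.GammaSeq (σ + 9 / 4) n * Real.GammaSeq (σ - 1 / 4) n /
        Real.GammaSeq (2 * σ + 1) n) ^ 2 * (A / (B * C)) := by
    rw [show (σ + t * I + 9 / 4 : ℂ) = ((σ + 9 / 4 : ℝ) : ℂ) + t * I by push_cast; ring,
      show (σ + t * I - 1 / 4 : ℂ) = ((σ - 1 / 4 : ℝ) : ℂ) + t * I by push_cast; ring,
      show (2 * (σ + t * I) + 1 : ℂ) = ((2 * σ + 1 : ℝ) : ℂ) + ((2 * t : ℝ) : ℂ) * I by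
        push_cast; ring,
      norm_div, norm_mul, div_pow, mul_pow, norm_GammaSeq_sq (by linarith) _ hn₀,
      norm_GammaSeq_sq (by linarith) _ hn₀, norm_GammaSeq_sq (by linarith) _ hn₀, hA, ← hB_def,
      ← hC_def]
    field_simp
  have hABC : (A / (B * C)) ^ 4 ≤ (1 + t ^ 2) ^ 2 := by
    rw [div_pow, div_le_iff₀ (by positivity)]
    exact prod_sqFactor_pow_four_le hT hσ hn
  have h8 (r : ℝ) : r ^ 8 = (r ^ 2) ^ 4 := by ring
  rw [h8, hsq, mul_pow, ← h8]
  gcongr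

theorem norm_Gamma_quotient_pow_eight_le {σ : ℝ} (hσ : 1 / 2 ≤ σ) (t : ℝ) :
    ‖Complex.Gamma (σ + t * I + 9 / 4) * Complex.Gamma (σ + t * I - 1 / 4) /
        Complex.Gamma (2 * (σ + t * I) + 1)‖ ^ 8 ≤
      (Real.Gamma (11 / 4) * Real.Gamma (1 / 4)) ^ 8 * (1 + t ^ 2) ^ 2 := by
  have hc : Complex.Gamma (2 * (σ + t * I) + 1) ≠ 0 :=
    Complex.Gamma_ne_zero_of_re_pos (by simp; linarith)
  have hlim := ((((Complex.GammaSeq_tendsto_Gamma (σ + t * I + 9 / 4)).mul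
    (Complex.GammaSeq_tendsto_Gamma (σ + t * I - 1 / 4))).div
    (Complex.GammaSeq_tendsto_Gamma _) hc).norm.pow 8)
  have hlim_half := (((((Real.GammaSeq_tendsto_Gamma (11 / 4)).mul
    (Real.GammaSeq_tendsto_Gamma (1 / 4))).div (Real.GammaSeq_tendsto_Gamma 2)
    (by rw [Real.Gamma_two]; exact one_ne_zero)).pow 8).mul_const ((1 + t ^ 2) ^ 2))
  rw [Real.Gamma_two, div_one] at hlim_half
  refine le_of_tendsto_of_tendsto hlim hlim_half ((eventually_ge_atTop 2).mono fun n hn => ?_)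
  refine (norm_GammaSeq_quotient_pow_eight_le hσ t hn).trans ?_
  have hn₀ : n ≠ 0 := by omega
  simp only [Pi.div_apply]
  gcongr ?_ ^ 8 * _
  · exact div_nonneg (mul_nonneg (GammaSeq_nonneg (by linarith) n)
      (GammaSeq_nonneg (by linarith) n)) (GammaSeq_nonneg (by linarith) n)
  · exact GammaSeq_quotient_le hσ hn₀

theorem Gamma_eleven_fourths_mul_Gamma_one_fourth :
    Real.Gamma (11 / 4) * Real.Gamma (1 / 4) = 21 / 16 * (√2 * π) := by
  have hrefl := Real.Gamma_mul_Gamma_one_sub (3 / 4)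
  rw [show π * (3 / 4) = π - π / 4 by ring, Real.sin_pi_sub, Real.sin_pi_div_four,
    show (1 : ℝ) - 3 / 4 = 1 / 4 by norm_num] at hrefl
  rw [show (11 / 4 : ℝ) = 3 / 4 + 1 + 1 by norm_num, Real.Gamma_add_one (by norm_num),
    Real.Gamma_add_one (by norm_num)]
  calc (3 / 4 + 1) * (3 / 4 * Real.Gamma (3 / 4)) * Real.Gamma (1 / 4)
      = 21 / 16 * (Real.Gamma (3 / 4) * Real.Gamma (1 / 4)) := by ring
    _ = 21 / 16 * (√2 * π) := by
        rw [hrefl]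
        field_simp
        norm_num

theorem Gamma_eleven_fourths_mul_Gamma_one_fourth_le :
    Real.Gamma (11 / 4) * Real.Gamma (1 / 4) ≤ 5.84 := by
  have hsqrt : √2 < 1.4143 := (Real.sqrt_lt' (by norm_num)).2 (by norm_num)
  rw [Gamma_eleven_fourths_mul_Gamma_one_fourth]
  nlinarith [pi_lt_d4, pi_pos, Real.sqrt_nonneg 2]

end GammaQuotient

theorem gamma_quotient_bound_general (δ t : ℝ) (hδ0 : 0 < δ) :
    ‖(Complex.Gamma ((1 / 2 + (δ : ℂ) / 2 + (t : ℂ) * Complex.I) + 9 / 4) *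
          Complex.Gamma ((1 / 2 + (δ : ℂ) / 2 + (t : ℂ) * Complex.I) - 1 / 4))‖ /
        ‖(Complex.Gamma (2 * (1 / 2 + (δ : ℂ) / 2 + (t : ℂ) * Complex.I) + 1))‖ ≤
      5.84 * (1 + |t|) ^ ((1 : ℝ) / 2) := by
  have hs : 1 / 2 + (δ : ℂ) / 2 + t * I = ((1 / 2 + δ / 2 : ℝ) : ℂ) + t * I := by push_cast; ring
  have hΓ := GammaQuotient.norm_Gamma_quotient_pow_eight_le (σ := 1 / 2 + δ / 2) (by linarith) t
  rw [hs, ← norm_div]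
  refine le_of_pow_le_pow_left₀ (n := 8) (by norm_num) (by positivity) (hΓ.trans ?_)
  calc (Real.Gamma (11 / 4) * Real.Gamma (1 / 4)) ^ 8 * (1 + t ^ 2) ^ 2
      ≤ 5.84 ^ 8 * ((1 + |t|) ^ 2) ^ 2 := by
        have hK₀ : 0 ≤ Real.Gamma (11 / 4) * Real.Gamma (1 / 4) := by positivity
        gcongr
        · exact GammaQuotient.Gamma_eleven_fourths_mul_Gamma_one_fourth_le
        · nlinarith [abs_nonneg t, sq_abs t]
    _ = (5.84 * (1 + |t|) ^ ((1 : ℝ) / 2)) ^ 8 := by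
        rw [mul_pow, ← rpow_natCast ((1 + |t|) ^ ((1 : ℝ) / 2)) 8, ← rpow_mul (by positivity)]
        norm_num
        ring

theorem gamma_quotient_bound (δ t : ℝ) (hδ0 : 0 < δ) (hδ : δ ≤ 1 / 4) :
    ‖(Complex.Gamma ((1 / 2 + (δ : ℂ) / 2 + (t : ℂ) * Complex.I) + 9 / 4) *
          Complex.Gamma ((1 / 2 + (δ : ℂ) / 2 + (t : ℂ) * Complex.I) - 1 / 4))‖ /
        ‖(Complex.Gamma (2 * (1 / 2 + (δ : ℂ) / 2 + (t : ℂ) * Complex.I) + 1))‖ ≤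
      5.84 * (1 + |t|) ^ ((1 : ℝ) / 2) :=
  gamma_quotient_bound_general δ t hδ0
end

section
/- For every real x with 0 < x ≤ 1, I_{−1/2}(x) + I_{3/2}(x) < 4.146·x^{−1/2}·e^{−x}; explicitly, √(2/(π·x))·(2·cosh(x) − sinh(x)/x) < 4.146·x^{−1/2}·e^{−x}. -/
/-!
Multiplying by `eˣ` turns `2 cosh x - sinh x / x` into `g (2x)` with
`g t = eᵗ + 1 - (eᵗ - 1) / t`. The function `g` is increasing on `(0, ∞)`: the numerator of
`g' t` is `eᵗ (t² - t + 1) - 1`, which is nonnegative since `eᵗ ≥ 1 + t + t²/2`.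
Hence for `0 < x ≤ 1` the left side is at most `√(2/π) · x^(-1/2) · e^(-x) · g 2`, and
`√(2/π) · g 2 = √(2/π) · (e² + 3) / 2 ≈ 4.1447`.
-/

open Real

lemma hasDerivAt_exp_add_one_sub_div {t : ℝ} (ht : t ≠ 0) :
    HasDerivAt (fun s => exp s + 1 - (exp s - 1) / s)
      ((exp t * (t ^ 2 - t + 1) - 1) / t ^ 2) t := by
  have h : HasDerivAt (fun s => exp s + 1 - (exp s - 1) / s)
      (exp t - (exp t * t - (exp t - 1) * 1) / t ^ 2) t :=
    ((hasDerivAt_exp t).add_const 1).sub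
      (((hasDerivAt_exp t).sub_const 1).div (hasDerivAt_id' t) ht)
  exact h.congr_deriv (by field_simp; ring)

lemma exp_add_one_sub_div_monotoneOn :
    MonotoneOn (fun t => exp t + 1 - (exp t - 1) / t) (Set.Ioi 0) := by
  refine monotoneOn_of_hasDerivWithinAt_nonneg (convex_Ioi 0)
    (f' := fun t => (exp t * (t ^ 2 - t + 1) - 1) / t ^ 2)
    (fun t ht => by fun_prop (disch := exact ne_of_gt ht)) ?_ ?_ <;>
    simp only [interior_Ioi, Set.mem_Ioi]
  · exact fun t ht => (hasDerivAt_exp_add_one_sub_div ht.ne').hasDerivWithinAt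
  · intro t ht
    have hexp := quadratic_le_exp_of_nonneg ht.le
    have hq : 0 < t ^ 2 - t + 1 := by nlinarith [sq_nonneg (t - 1)]
    have : 0 ≤ exp t * (t ^ 2 - t + 1) - 1 := by
      nlinarith [mul_le_mul_of_nonneg_right hexp hq.le, pow_pos ht 3, pow_pos ht 4]
    positivity

lemma two_mul_cosh_sub_sinh_div (x : ℝ) :
    2 * cosh x - sinh x / x = exp (-x) * (exp (2 * x) + 1 - (exp (2 * x) - 1) / (2 * x)) := by
  have hsplit : exp (2 * x) = exp x * exp x := by rw [← exp_add, two_mul]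
  have hinv : exp (-x) * exp x = 1 := by rw [← exp_add, neg_add_cancel, exp_zero]
  rw [cosh_eq, sinh_eq, hsplit]
  linear_combination (-exp x) * (1 - 1 / (2 * x)) * hinv

lemma sqrt_two_div_pi_mul (x : ℝ) (hx : 0 ≤ x) :
    √(2 / (π * x)) = √(2 / π) * x ^ (-(1 : ℝ) / 2) := by
  rw [← div_div, sqrt_div' _ hx, neg_div, rpow_neg hx, ← sqrt_eq_rpow, div_eq_mul_inv]

lemma sqrt_two_div_pi_mul_exp_two_lt : √(2 / π) * ((exp 2 + 3) / 2) < 4.146 := by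
  have he : exp 2 < 2.7182818286 ^ 2 := by
    rw [show (2 : ℝ) = 1 + 1 by norm_num, exp_add, ← sq]
    exact pow_lt_pow_left₀ exp_one_lt_d9 (exp_pos 1).le two_ne_zero
  have hs : √(2 / π) < 8.292 / (exp 2 + 3) := by
    rw [sqrt_lt' (by positivity), div_pow, div_lt_div_iff₀ pi_pos (by positivity)]
    nlinarith [pi_gt_d6, exp_pos 2]
  calc √(2 / π) * ((exp 2 + 3) / 2) < 8.292 / (exp 2 + 3) * ((exp 2 + 3) / 2) := by gcongr
    _ = 4.146 := by field_simp; norm_num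

theorem bessel_I_sum_bound_small (x : ℝ) (h0 : 0 < x) (h1 : x ≤ 1) :
    Real.sqrt (2 / (π * x)) * (2 * Real.cosh x - Real.sinh x / x) <
      4.146 * x ^ (-(1 : ℝ) / 2) * Real.exp (-x) := by
  have hg : exp (2 * x) + 1 - (exp (2 * x) - 1) / (2 * x) ≤ exp 2 + 1 - (exp 2 - 1) / 2 :=
    exp_add_one_sub_div_monotoneOn (Set.mem_Ioi.2 (by positivity)) (by norm_num) (by linarith)
  rw [show exp 2 + 1 - (exp 2 - 1) / 2 = (exp 2 + 3) / 2 by ring] at hg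
  have hpos : 0 < x ^ (-(1 : ℝ) / 2) * exp (-x) := by positivity
  rw [sqrt_two_div_pi_mul x h0.le, two_mul_cosh_sub_sinh_div]
  calc √(2 / π) * x ^ (-(1 : ℝ) / 2) *
        (exp (-x) * (exp (2 * x) + 1 - (exp (2 * x) - 1) / (2 * x)))
      = x ^ (-(1 : ℝ) / 2) * exp (-x) *
          (√(2 / π) * (exp (2 * x) + 1 - (exp (2 * x) - 1) / (2 * x))) := by ring
    _ ≤ x ^ (-(1 : ℝ) / 2) * exp (-x) * (√(2 / π) * ((exp 2 + 3) / 2)) := by gcongr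
    _ < x ^ (-(1 : ℝ) / 2) * exp (-x) * 4.146 := by gcongr; exact sqrt_two_div_pi_mul_exp_two_lt
    _ = 4.146 * x ^ (-(1 : ℝ) / 2) * exp (-x) := by ring
end

section
/- For every real x ≥ 1, I_{−1/2}(x) + I_{3/2}(x) < 0.798·x^{−1/2}·e^{x}; explicitly, √(2/(π·x))·(2·cosh(x) − sinh(x)/x) < 0.798·x^{−1/2}·e^{x}. -/
/-!
Since `sinh x > x > x·e^{-x}` for `x > 0`, the bracket `2 cosh x - sinh x / x` is below
`e^x + e^{-x} - e^{-x} = e^x`, and the remaining constant is `√(2/π) ≈ 0.7979 < 0.798`.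
-/

open Real

lemma exp_neg_lt_sinh_div_self {x : ℝ} (hx : 0 < x) : exp (-x) < sinh x / x := by
  rw [lt_div_iff₀ hx]
  calc exp (-x) * x < 1 * x := mul_lt_mul_of_pos_right (exp_lt_one_iff.2 (neg_lt_zero.2 hx)) hx
    _ = x := one_mul x
    _ < sinh x := self_lt_sinh_iff.2 hx

lemma two_mul_cosh_sub_sinh_div_self_lt_exp {x : ℝ} (hx : 0 < x) :
    2 * cosh x - sinh x / x < exp x := by
  have := exp_neg_lt_sinh_div_self hx
  rw [cosh_eq]
  linarith

lemma sqrt_two_div_pi_lt : sqrt (2 / π) < 0.798 := by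
  rw [sqrt_lt' (by norm_num), div_lt_iff₀ pi_pos]
  linarith [pi_gt_d6]

lemma sqrt_two_div_pi_mul_eq {x : ℝ} (hx : 0 < x) :
    sqrt (2 / (π * x)) = sqrt (2 / π) * x ^ (-(1 : ℝ) / 2) := by
  rw [div_mul_eq_div_div, sqrt_div (by positivity), div_eq_mul_inv, neg_div, rpow_neg hx.le,
    ← sqrt_eq_rpow]

theorem bessel_I_sum_bound_large (x : ℝ) (h1 : 1 ≤ x) :
    Real.sqrt (2 / (π * x)) * (2 * Real.cosh x - Real.sinh x / x) <
      0.798 * x ^ (-(1 : ℝ) / 2) * Real.exp x := by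
  have hx : 0 < x := one_pos.trans_le h1
  calc sqrt (2 / (π * x)) * (2 * cosh x - sinh x / x)
      < sqrt (2 / (π * x)) * exp x :=
        mul_lt_mul_of_pos_left (two_mul_cosh_sub_sinh_div_self_lt_exp hx)
          (sqrt_pos.2 (by positivity))
    _ = sqrt (2 / π) * x ^ (-(1 : ℝ) / 2) * exp x := by rw [sqrt_two_div_pi_mul_eq hx]
    _ < 0.798 * x ^ (-(1 : ℝ) / 2) * exp x := by gcongr; exact sqrt_two_div_pi_lt
end

section
/- For every integer c ≥ 1 one has 2^{ω_o(c)} ≤ 8.447·c^{1/4} and 2^{ω_o(c)} ≤ 28.117·c^{1/5}; i.e. the constant ℓ(δ) in the inequality 2^{ω_o(c)} ≤ ℓ(δ)·c^δ may be taken to be ℓ(1/4) = 8.447 and ℓ(1/5) = 28.117. -/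
open Real
open Finset

lemma key_gen (B C : ℕ) (L : Finset ℕ)
    (hL : ∀ p, p.Prime → p ≠ 2 → p < B → p ∈ L)
    (hLB : ∀ p ∈ L, p ≤ B)
    (hLpos : ∀ p ∈ L, 0 < p)
    (hfull : B ^ L.card ≤ C * ∏ p ∈ L, p)
    (S : Finset ℕ) (hS : ∀ p ∈ S, p.Prime ∧ p ≠ 2) :
    B ^ S.card ≤ C * ∏ p ∈ S, p := by
  classical
  set T := S.filter (· < B) with hTdef
  set U := S.filter (fun p => ¬ p < B) with hUdef
  have hsplitc : T.card + U.card = S.card :=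
    Finset.card_filter_add_card_filter_not _
  have hsplitp : (∏ p ∈ T, p) * (∏ p ∈ U, p) = ∏ p ∈ S, p :=
    Finset.prod_filter_mul_prod_filter_not S _ _
  have hUle : B ^ U.card ≤ ∏ p ∈ U, p := by
    apply Finset.pow_card_le_prod
    intro x hx
    simpa using (Finset.mem_filter.mp hx).2
  have hTsub : T ⊆ L := by
    intro p hp
    obtain ⟨hpS, hpB⟩ := Finset.mem_filter.mp hp
    exact hL p (hS p hpS).1 (hS p hpS).2 hpB
  -- key small-set bound via padding
  have hT : B ^ T.card ≤ C * ∏ p ∈ T, p := by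
    have hX : (∏ p ∈ L \ T, p) * ∏ p ∈ T, p = ∏ p ∈ L, p := Finset.prod_sdiff hTsub
    have hXle : ∏ p ∈ L \ T, p ≤ B ^ (L \ T).card := by
      apply Finset.prod_le_pow_card
      intro x hx
      exact hLB x (Finset.mem_sdiff.mp hx).1
    have hcard : (L \ T).card + T.card = L.card := by
      rw [Finset.card_sdiff_of_subset hTsub]
      exact Nat.sub_add_cancel (Finset.card_le_card hTsub)
    have hXpos : 0 < ∏ p ∈ L \ T, p :=
      Finset.prod_pos fun x hx => hLpos x (Finset.mem_sdiff.mp hx).1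
    have hchain : B ^ T.card * ∏ p ∈ L \ T, p ≤ (C * ∏ p ∈ T, p) * ∏ p ∈ L \ T, p := by
      calc B ^ T.card * ∏ p ∈ L \ T, p ≤ B ^ T.card * B ^ (L \ T).card :=
            Nat.mul_le_mul_left _ hXle
        _ = B ^ L.card := by rw [← pow_add]; congr 1; omega
        _ ≤ C * ∏ p ∈ L, p := hfull
        _ = (C * ∏ p ∈ T, p) * ∏ p ∈ L \ T, p := by
            rw [mul_assoc, mul_comm (∏ p ∈ T, p), hX]
    exact Nat.le_of_mul_le_mul_right hchain hXpos
  calc B ^ S.card = B ^ T.card * B ^ U.card := by rw [← pow_add, hsplitc]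
    _ ≤ (C * ∏ p ∈ T, p) * ∏ p ∈ U, p := Nat.mul_le_mul hT hUle
    _ = C * ∏ p ∈ S, p := by rw [mul_assoc, hsplitp]

lemma key16 (S : Finset ℕ) (hS : ∀ p ∈ S, p.Prime ∧ p ≠ 2) :
    16 ^ S.card ≤ 70 * ∏ p ∈ S, p := by
  apply key_gen 16 70 {3,5,7,11,13} _ _ _ _ S hS
  · intro p hp h2 hB
    have := hp.two_le
    interval_cases p <;> simp_all (config := {decide := true})
  · decide
  · decide
  · decide

lemma key32 (S : Finset ℕ) (hS : ∀ p ∈ S, p.Prime ∧ p ≠ 2) :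
    32 ^ S.card ≤ 11300 * ∏ p ∈ S, p := by
  apply key_gen 32 11300 {3,5,7,11,13,17,19,23,29,31} _ _ _ _ S hS
  · intro p hp h2 hB
    have := hp.two_le
    interval_cases p <;> simp_all (config := {decide := true})
  · decide
  · decide
  · decide

/-- `ω_o(c)`: the number of distinct odd primes dividing `c`. -/
def omegaOdd (c : ℕ) : ℕ := (c.primeFactors.filter (fun p => p ≠ 2)).card

theorem omegaOdd_bounds (c : ℕ) (hc : 1 ≤ c) :
    (2 : ℝ) ^ omegaOdd c ≤ 8.447 * (c : ℝ) ^ ((1 : ℝ) / 4) ∧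
      (2 : ℝ) ^ omegaOdd c ≤ 28.117 * (c : ℝ) ^ ((1 : ℝ) / 5) := by
  set S := c.primeFactors.filter (fun p => p ≠ 2) with hSdef
  have hS : ∀ p ∈ S, p.Prime ∧ p ≠ 2 := by
    intro p hp
    obtain ⟨hp1, hp2⟩ := Finset.mem_filter.mp hp
    exact ⟨Nat.prime_of_mem_primeFactors hp1, hp2⟩
  have hdvd : ∏ p ∈ S, p ∣ c :=
    dvd_trans (Finset.prod_dvd_prod_of_subset _ _ _ (Finset.filter_subset _ _))
      (Nat.prod_primeFactors_dvd c)
  have hPle : ∏ p ∈ S, p ≤ c := Nat.le_of_dvd hc hdvd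
  have h16 : (16:ℕ) ^ omegaOdd c ≤ 70 * c :=
    le_trans (key16 S hS) (Nat.mul_le_mul_left 70 hPle)
  have h32 : (32:ℕ) ^ omegaOdd c ≤ 11300 * c :=
    le_trans (key32 S hS) (Nat.mul_le_mul_left 11300 hPle)
  have hc0 : (0:ℝ) ≤ (c:ℝ) := Nat.cast_nonneg c
  constructor
  · refine le_of_pow_le_pow_left₀ (n := 4) (by norm_num) (by positivity) ?_
    have h1 : ((2:ℝ) ^ omegaOdd c) ^ 4 = 16 ^ omegaOdd c := by
      rw [← pow_mul, mul_comm, pow_mul]; norm_num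
    have h4 : ((c:ℝ) ^ ((1:ℝ)/4)) ^ (4:ℕ) = (c:ℝ) := by
      rw [← Real.rpow_natCast ((c:ℝ) ^ ((1:ℝ)/4)) 4, ← Real.rpow_mul hc0]
      norm_num
    rw [h1, mul_pow, h4]
    calc (16:ℝ) ^ omegaOdd c ≤ 70 * (c:ℝ) := by exact_mod_cast h16
      _ ≤ 8.447 ^ 4 * (c:ℝ) := by nlinarith
  · refine le_of_pow_le_pow_left₀ (n := 5) (by norm_num) (by positivity) ?_
    have h1 : ((2:ℝ) ^ omegaOdd c) ^ 5 = 32 ^ omegaOdd c := by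
      rw [← pow_mul, mul_comm, pow_mul]; norm_num
    have h4 : ((c:ℝ) ^ ((1:ℝ)/5)) ^ (5:ℕ) = (c:ℝ) := by
      rw [← Real.rpow_natCast ((c:ℝ) ^ ((1:ℝ)/5)) 5, ← Real.rpow_mul hc0]
      norm_num
    rw [h1, mul_pow, h4]
    calc (32:ℝ) ^ omegaOdd c ≤ 11300 * (c:ℝ) := by exact_mod_cast h32
      _ ≤ 28.117 ^ 5 * (c:ℝ) := by nlinarith
end

section
/- For every real δ with 0 < δ ≤ 1/4, ∫₀² √((1 + t/2)/(δ² + t²)) dt ≤ 2.7·|log δ|. -/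
open Real MeasureTheory

theorem integral_sqrt_bound (δ : ℝ) (h0 : 0 < δ) (h : δ ≤ 1 / 4) :
    (∫ t in (0 : ℝ)..2, Real.sqrt ((1 + t / 2) / (δ ^ 2 + t ^ 2))) ≤ 2.7 * |Real.log δ| := by
  have hδ2 : ∀ t : ℝ, 0 < δ ^ 2 + t ^ 2 := fun t => by positivity
  have hcont : Continuous fun t : ℝ => Real.sqrt ((1 + t / 2) / (δ ^ 2 + t ^ 2)) := by
    apply Real.continuous_sqrt.comp
    exact (continuous_const.add (continuous_id.div_const 2)).div
      (continuous_const.add (continuous_pow 2)) (fun t => (hδ2 t).ne')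
  have hint1 : IntervalIntegrable (fun t : ℝ => Real.sqrt ((1 + t / 2) / (δ ^ 2 + t ^ 2)))
      volume 0 (1/2) := hcont.intervalIntegrable _ _
  have hint2 : IntervalIntegrable (fun t : ℝ => Real.sqrt ((1 + t / 2) / (δ ^ 2 + t ^ 2)))
      volume (1/2) 2 := hcont.intervalIntegrable _ _
  have hsplit : (∫ t in (0 : ℝ)..2, Real.sqrt ((1 + t / 2) / (δ ^ 2 + t ^ 2)))
      = (∫ t in (0 : ℝ)..(1/2), Real.sqrt ((1 + t / 2) / (δ ^ 2 + t ^ 2)))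
        + ∫ t in (1/2 : ℝ)..2, Real.sqrt ((1 + t / 2) / (δ ^ 2 + t ^ 2)) :=
    (intervalIntegral.integral_add_adjacent_intervals hint1 hint2).symm
  -- first piece
  have hg1 : IntervalIntegrable (fun t : ℝ => Real.sqrt (5/2) * (t + δ)⁻¹) volume 0 (1/2) := by
    apply ContinuousOn.intervalIntegrable
    apply ContinuousOn.mul continuousOn_const
    apply ContinuousOn.inv₀ (by fun_prop)
    intro x hx
    rw [Set.uIcc_of_le (by norm_num)] at hx
    nlinarith [hx.1]
  have hb1 : (∫ t in (0:ℝ)..(1/2), Real.sqrt ((1 + t / 2) / (δ ^ 2 + t ^ 2)))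
      ≤ Real.sqrt (5/2) * (Real.log (δ + 1/2) - Real.log δ) := by
    have hle : ∀ t ∈ Set.Icc (0:ℝ) (1/2),
        Real.sqrt ((1 + t / 2) / (δ ^ 2 + t ^ 2)) ≤ Real.sqrt (5/2) * (t + δ)⁻¹ := by
      intro t ht
      have ht0 := ht.1
      have ht1 := ht.2
      have htδ : 0 < t + δ := by linarith
      have h1 : (1 + t / 2) / (δ ^ 2 + t ^ 2) ≤ (5/2) / (t + δ) ^ 2 := by
        rw [div_le_div_iff₀ (hδ2 t) (by positivity)]
        nlinarith [sq_nonneg (δ - t)]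
      calc Real.sqrt ((1 + t / 2) / (δ ^ 2 + t ^ 2)) ≤ Real.sqrt ((5/2) / (t + δ) ^ 2) :=
            Real.sqrt_le_sqrt h1
        _ = Real.sqrt (5/2) * (t + δ)⁻¹ := by
            rw [Real.sqrt_div (by norm_num) , Real.sqrt_sq htδ.le, div_eq_mul_inv]
    calc (∫ t in (0:ℝ)..(1/2), Real.sqrt ((1 + t / 2) / (δ ^ 2 + t ^ 2)))
        ≤ ∫ t in (0:ℝ)..(1/2), Real.sqrt (5/2) * (t + δ)⁻¹ :=
          intervalIntegral.integral_mono_on (by norm_num) hint1 hg1 hle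
      _ = Real.sqrt (5/2) * ∫ t in (0:ℝ)..(1/2), (t + δ)⁻¹ :=
          intervalIntegral.integral_const_mul _ _
      _ = Real.sqrt (5/2) * (Real.log (δ + 1/2) - Real.log δ) := by
          rw [intervalIntegral.integral_comp_add_right (fun x => x⁻¹) δ]
          rw [integral_inv (by intro hc; rw [Set.uIcc_of_le (by linarith)] at hc; linarith [hc.1])]
          rw [zero_add, add_comm δ (1/2:ℝ), Real.log_div (by linarith) h0.ne']
  -- second piece
  have hg2 : IntervalIntegrable (fun t : ℝ => t⁻¹ + 1/4) volume (1/2) 2 := by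
    apply ContinuousOn.intervalIntegrable
    apply ContinuousOn.add _ continuousOn_const
    apply ContinuousOn.inv₀ (by fun_prop)
    intro x hx
    rw [Set.uIcc_of_le (by norm_num)] at hx
    nlinarith [hx.1]
  have hb2 : (∫ t in (1/2 : ℝ)..2, Real.sqrt ((1 + t / 2) / (δ ^ 2 + t ^ 2)))
      ≤ Real.log 4 + 3/8 := by
    have hle : ∀ t ∈ Set.Icc (1/2:ℝ) 2,
        Real.sqrt ((1 + t / 2) / (δ ^ 2 + t ^ 2)) ≤ t⁻¹ + 1/4 := by
      intro t ht
      have ht0 : (0:ℝ) < t := by linarith [ht.1]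
      have h1 : (1 + t / 2) / (δ ^ 2 + t ^ 2) ≤ (1 + t / 2) / t ^ 2 := by
        apply div_le_div_of_nonneg_left (by linarith [ht.1]) (by positivity)
        nlinarith
      calc Real.sqrt ((1 + t / 2) / (δ ^ 2 + t ^ 2)) ≤ Real.sqrt ((1 + t / 2) / t ^ 2) :=
            Real.sqrt_le_sqrt h1
        _ = Real.sqrt (1 + t / 2) / t := by
            rw [Real.sqrt_div (by linarith [ht.1]), Real.sqrt_sq ht0.le]
        _ ≤ (1 + t/4) / t := by
            gcongr
            calc Real.sqrt (1 + t / 2) ≤ Real.sqrt ((1 + t/4)^2) :=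
                  Real.sqrt_le_sqrt (by nlinarith)
              _ = 1 + t/4 := Real.sqrt_sq (by linarith)
        _ = t⁻¹ + 1/4 := by
            rw [div_eq_iff ht0.ne', add_mul, inv_mul_cancel₀ ht0.ne']; ring
    have hinv : IntervalIntegrable (fun t : ℝ => t⁻¹) volume (1/2) 2 := by
      apply ContinuousOn.intervalIntegrable
      apply ContinuousOn.inv₀ (by fun_prop)
      intro x hx
      rw [Set.uIcc_of_le (by norm_num)] at hx
      nlinarith [hx.1]
    calc (∫ t in (1/2 : ℝ)..2, Real.sqrt ((1 + t / 2) / (δ ^ 2 + t ^ 2)))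
        ≤ ∫ t in (1/2:ℝ)..2, (t⁻¹ + 1/4) :=
          intervalIntegral.integral_mono_on (by norm_num) hint2 hg2 hle
      _ = Real.log 4 + 3/8 := by
          rw [intervalIntegral.integral_add hinv (intervalIntegrable_const)]
          rw [integral_inv (by intro hc; rw [Set.uIcc_of_le (by norm_num)] at hc; have := hc.1; norm_num at this)]
          norm_num
  -- numeric finish
  have hlogδ : Real.log δ < 0 := Real.log_neg h0 (by linarith)
  have habs : |Real.log δ| = -Real.log δ := abs_of_neg hlogδ
  have hs_lb : (1.5811 : ℝ) ≤ Real.sqrt (5/2) := by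
    rw [show (1.5811:ℝ) = Real.sqrt (1.5811^2) from (Real.sqrt_sq (by norm_num)).symm]
    exact Real.sqrt_le_sqrt (by norm_num)
  have hs_ub : Real.sqrt (5/2) ≤ (1.5812 : ℝ) := by
    rw [show (1.5812:ℝ) = Real.sqrt (1.5812^2) from (Real.sqrt_sq (by norm_num)).symm]
    exact Real.sqrt_le_sqrt (by norm_num)
  have hlog4 : Real.log 4 = 2 * Real.log 2 := by
    rw [show (4:ℝ) = 2^2 by norm_num, Real.log_pow]; push_cast; ring
  have hl2a := Real.log_two_gt_d9
  have hl2b := Real.log_two_lt_d9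
  have hL : Real.log 4 ≤ -Real.log δ := by
    have := Real.log_le_log h0 h
    rw [show (1/4:ℝ) = 4⁻¹ by norm_num, Real.log_inv] at this
    linarith
  have hlogδ12 : Real.log (δ + 1/2) ≤ -(1/4) := by
    have := Real.log_le_sub_one_of_pos (show (0:ℝ) < δ + 1/2 by linarith)
    linarith
  rw [hsplit, habs]
  have key : Real.sqrt (5/2) * (Real.log (δ + 1/2) - Real.log δ) + (Real.log 4 + 3/8)
      ≤ 2.7 * -Real.log δ := by
    have hs0 : (0:ℝ) ≤ Real.sqrt (5/2) := Real.sqrt_nonneg _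
    nlinarith [mul_le_mul_of_nonneg_left hlogδ12 hs0,
      mul_le_mul_of_nonneg_right hL (show (0:ℝ) ≤ 2.7 - Real.sqrt (5/2) by linarith),
      mul_le_mul_of_nonneg_right hs_ub (show (0:ℝ) ≤ -Real.log δ by linarith)]
  linarith [hb1, hb2]
end
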